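/- Given the two unnormalized quantum outcome weights P_T(θ) = a² + b² + 2ab·cos θ and P_F(θ') = c² + d² + 2cd·cos θ' with a,b,c,d > 0, for any target value q strictly between (a-b)²/((a-b)²+(c+d)²) and (a+b)²/((a+b)²+(c-d)²) there exist angles θ, θ' such that P_T(θ)/(P_T(θ)+P_F(θ')) = q. -/

import Mathlib

/-- Any value in `[(u-v)^2, (u+v)^2]` is achievable as `u^2+v^2+2uv cos θ`. -/
lemma exists_cos_weight (u v x : ℝ) (hu : 0 < u) (hv : 0 < v)
    (h1 : (u - v) ^ 2 ≤ x) (h2 : x ≤ (u + v) ^ 2) :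
    ∃ θ : ℝ, u ^ 2 + v ^ 2 + 2 * u * v * Real.cos θ = x := by
  have huv : 0 < 2 * u * v := by positivity
  refine ⟨Real.arccos ((x - u ^ 2 - v ^ 2) / (2 * u * v)), ?_⟩
  rw [Real.cos_arccos]
  · field_simp; ring
  · rw [le_div_iff₀ huv]; nlinarith
  · rw [div_le_iff₀ huv]; nlinarith

/-- The normalized quantum-like probability can fit any target value strictly
between the extreme achievable ratios by choosing interference phases. -/
theorem quantum_fit_any_probability (a b c d q : ℝ)
    (ha : 0 < a) (hb : 0 < b) (hc : 0 < c) (hd : 0 < d)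
    (hq1 : (a - b) ^ 2 / ((a - b) ^ 2 + (c + d) ^ 2) < q)
    (hq2 : q < (a + b) ^ 2 / ((a + b) ^ 2 + (c - d) ^ 2)) :
    ∃ θ θ' : ℝ,
      (a ^ 2 + b ^ 2 + 2 * a * b * Real.cos θ) /
        ((a ^ 2 + b ^ 2 + 2 * a * b * Real.cos θ) +
          (c ^ 2 + d ^ 2 + 2 * c * d * Real.cos θ')) = q := by
  set xmin := (a - b) ^ 2 with hxmin
  set xmax := (a + b) ^ 2 with hxmax
  set ymin := (c - d) ^ 2 with hymin
  set ymax := (c + d) ^ 2 with hymax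
  have hxmaxpos : 0 < xmax := by positivity
  have hymaxpos : 0 < ymax := by positivity
  have hden1 : 0 < xmin + ymax := by positivity
  have hden2 : 0 < xmax + ymin := by positivity
  -- translate hypotheses
  have h1 : xmin < q * (xmin + ymax) := by
    have := (div_lt_iff₀ hden1).mp hq1; linarith
  have h2 : q * (xmax + ymin) < xmax := by
    have := (lt_div_iff₀ hden2).mp hq2; linarith
  have hq0 : 0 < q := by
    rcases lt_or_ge 0 q with h | h
    · exact h
    · exfalso; nlinarith [sq_nonneg (a - b), sq_nonneg (c + d)]
  have hq1' : q < 1 := by nlinarith [sq_nonneg (c - d)]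
  have h1q : 0 < 1 - q := by linarith
  -- rewrite: xmin * (1-q) < q * ymax  and  q * ymin < xmax * (1-q)
  have h1' : xmin * (1 - q) < q * ymax := by nlinarith
  have h2' : q * ymin < xmax * (1 - q) := by nlinarith
  -- choose x, y with x*(1-q) = q*y, xmin ≤ x ≤ xmax, ymin ≤ y ≤ ymax
  obtain ⟨x, y, hxy, hx1, hx2, hy1, hy2, hypos⟩ :
      ∃ x y : ℝ, x * (1 - q) = q * y ∧ xmin ≤ x ∧ x ≤ xmax ∧
        ymin ≤ y ∧ y ≤ ymax ∧ 0 < x + y := by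
    rcases le_or_gt (q * ymax) (xmax * (1 - q)) with h | h
    · refine ⟨q * ymax / (1 - q), ymax, by field_simp, ?_, ?_, ?_, le_refl _, ?_⟩
      · rw [le_div_iff₀ h1q]; linarith
      · rw [div_le_iff₀ h1q]; linarith
      · nlinarith [sq_nonneg (c - d)]
      · positivity
    · refine ⟨xmax, xmax * (1 - q) / q, by field_simp, by nlinarith, le_refl _, ?_, ?_, ?_⟩
      · rw [le_div_iff₀ hq0]; linarith [mul_comm q ymin]
      · rw [div_le_iff₀ hq0]; linarith [mul_comm q ymax]
      · positivity
  obtain ⟨θ, hθ⟩ := exists_cos_weight a b x ha hb hx1 hx2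
  obtain ⟨θ', hθ'⟩ := exists_cos_weight c d y hc hd hy1 hy2
  refine ⟨θ, θ', ?_⟩
  rw [hθ, hθ']
  rw [div_eq_iff (by linarith)]
  linear_combination hxy
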